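/- Let A be a commutative ring, let S be a step set whose only horizontal step is (1,0) (i.e. (a,0) ∈ S if and only if a = 1) and such that every (a,b) ∈ S with b > 0 satisfies a ≤ b, and let w : S → A be a weight function with w((1,0)) = ρ. Let P^w(t) = Σ_{n≥0} p^w_n tⁿ, let D_0^w(t) = Σ_{n≥0} a^w_{n,n} tⁿ, and let D_1^w(t) = Σ_{n≥1} a^w_{n−1,n} tⁿ. Then in A⟦t⟧: P^w(t) · (1 + ρ·D_1^w(t)) = D_0^w(t). -/

import Mathlib

/-- x-coordinate of the `j`-th node of the path `p` (partial sum of first coordinates). -/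
def xPart (p : List (ℕ × ℕ)) (j : ℕ) : ℕ := ((p.take j).map Prod.fst).sum

/-- y-coordinate of the `j`-th node of the path `p` (partial sum of second coordinates). -/
def yPart (p : List (ℕ × ℕ)) (j : ℕ) : ℕ := ((p.take j).map Prod.snd).sum

/-- `p` is an `S`-path from `(0,0)` to `(n,m)`. -/
def IsPath (S : Set (ℕ × ℕ)) (n m : ℕ) (p : List (ℕ × ℕ)) : Prop :=
  (∀ st ∈ p, st ∈ S) ∧ xPart p p.length = n ∧ yPart p p.length = m

/-- `p` is Catalan: every node `(x, y)` satisfies `x ≤ y`. -/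
def IsCatalan (p : List (ℕ × ℕ)) : Prop :=
  ∀ j ≤ p.length, xPart p j ≤ yPart p j

/-- The number of `S`-paths from `(0,0)` to `(n,m)`. -/
noncomputable def aCount (S : Set (ℕ × ℕ)) (n m : ℕ) : ℕ :=
  Set.ncard {p : List (ℕ × ℕ) | IsPath S n m p}

/-- The number of Catalan `S`-paths from `(0,0)` to `(n,n)`. -/
noncomputable def pCatalan (S : Set (ℕ × ℕ)) (n : ℕ) : ℕ :=
  Set.ncard {p : List (ℕ × ℕ) | IsPath S n n p ∧ IsCatalan p}

/-!
Every non-Catalan `S`-path to `(n, n)` has a first node strictly below the diagonal. The step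
into it starts on or above the diagonal, so it cannot have slope `≥ 1`: it is the horizontal step
`(1, 0)`, taken from a diagonal node `(c, c)`. Cutting there writes the path uniquely as
`q ++ (1, 0) :: r`, with `q` a Catalan path to `(c, c)` and `r` a path of displacement
`(k, k + 1)`, `c + k + 1 = n`. Hence `a_{n,n} = p_n + ρ ∑_{c + k + 1 = n} p_c a_{k,k+1}`, which is
the coefficient of `t ^ n` in the claimed identity.
-/

open Finset PowerSeries

section Paths

variable {S : Set (ℕ × ℕ)} {n m : ℕ} {p : List (ℕ × ℕ)}

theorem xPart_eq (p : List (ℕ × ℕ)) (j : ℕ) : xPart p j = (p.take j).sum.1 :=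
  (map_list_sum (AddMonoidHom.fst ℕ ℕ) _).symm

theorem yPart_eq (p : List (ℕ × ℕ)) (j : ℕ) : yPart p j = (p.take j).sum.2 :=
  (map_list_sum (AddMonoidHom.snd ℕ ℕ) _).symm

theorem isPath_iff : IsPath S n m p ↔ (∀ s ∈ p, s ∈ S) ∧ p.sum = (n, m) := by
  simp only [IsPath, xPart_eq, yPart_eq, List.take_length, Prod.ext_iff]

theorem IsPath.sum_fst_eq_snd (hp : IsPath S n n p) : p.sum.1 = p.sum.2 := by
  simp [(isPath_iff.1 hp).2]

theorem isCatalan_iff : IsCatalan p ↔ ∀ j, (p.take j).sum.1 ≤ (p.take j).sum.2 := by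
  refine ⟨fun h j => ?_, fun h j _ => by simpa only [xPart_eq, yPart_eq] using h j⟩
  rcases le_total j p.length with hj | hj
  · simpa only [xPart_eq, yPart_eq] using h j hj
  · simpa only [xPart_eq, yPart_eq, List.take_of_length_le hj, List.take_length] using
      h p.length le_rfl

theorem isCatalan_take_iff {t : ℕ} :
    IsCatalan (p.take t) ↔ ∀ j ≤ t, (p.take j).sum.1 ≤ (p.take j).sum.2 := by
  refine isCatalan_iff.trans ⟨fun h j hj => ?_, fun h j => ?_⟩
  · simpa only [List.take_take, min_eq_left hj] using h j
  · simpa only [List.take_take] using h (min j t) (min_le_right j t)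

theorem IsCatalan.take (h : IsCatalan p) (t : ℕ) : IsCatalan (p.take t) :=
  isCatalan_take_iff.2 fun j _ => isCatalan_iff.1 h j

theorem setOf_isPath_finite (h00 : (0, 0) ∉ S) (n m : ℕ) :
    {p : List (ℕ × ℕ) | IsPath S n m p}.Finite := by
  let B : Set (ℕ × ℕ) := Set.Iic (n, m)
  have : Finite B := (Set.finite_Iic (n, m)).to_subtype
  refine ((List.finite_length_le B (n + m)).image (List.map Subtype.val)).subset ?_
  intro p hp
  obtain ⟨hS, hsum⟩ := isPath_iff.1 hp
  have hlen : p.length ≤ n + m := by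
    let size : ℕ × ℕ →+ ℕ := AddMonoidHom.fst ℕ ℕ + AddMonoidHom.snd ℕ ℕ
    have hstep : ∀ k ∈ p.map size, 1 ≤ k := List.forall_mem_map.2 fun s hs =>
      Nat.one_le_iff_ne_zero.2 fun h => h00 <| by
        obtain ⟨a, b⟩ := s
        obtain ⟨rfl, rfl⟩ : a = 0 ∧ b = 0 := by simpa [size] using h
        exact hS _ hs
    calc p.length ≤ (p.map size).sum := by simpa using List.length_le_sum_of_one_le _ hstep
      _ = n + m := by rw [← map_list_sum, hsum]; rfl
  lift p to List B using fun s hs => (hsum ▸ List.le_sum_of_mem hs : s ≤ (n, m))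
  exact ⟨p, by simpa using hlen, rfl⟩

theorem isCatalan_of_isPath_zero (hp : IsPath S 0 0 p) : IsCatalan p := by
  refine isCatalan_iff.2 fun j => ?_
  have h := List.sum_take_add_sum_drop p j
  rw [(isPath_iff.1 hp).2, Prod.ext_iff] at h
  simp only [Prod.fst_add, Prod.snd_add] at h
  omega

theorem isPath_append_horizontal {q r : List (ℕ × ℕ)} {i k : ℕ} (h10 : (1, 0) ∈ S)
    (hq : IsPath S i i q) (hr : IsPath S k (k + 1) r) :
    IsPath S (i + k + 1) (i + k + 1) (q ++ (1, 0) :: r) := by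
  rw [isPath_iff] at hq hr ⊢
  refine ⟨fun s hs => ?_, ?_⟩
  · simp only [List.mem_append, List.mem_cons] at hs
    rcases hs with hs | rfl | hs
    exacts [hq.1 s hs, h10, hr.1 s hs]
  · simp only [List.sum_append, List.sum_cons, hq.2, hr.2, Prod.ext_iff, Prod.fst_add,
      Prod.snd_add]
    omega

theorem isCatalan_take_append_horizontal_iff {q : List (ℕ × ℕ)} (hq : IsCatalan q)
    (hdiag : q.sum.1 = q.sum.2) (r : List (ℕ × ℕ)) (j : ℕ) :
    IsCatalan ((q ++ (1, 0) :: r).take j) ↔ j ≤ q.length := by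
  refine ⟨fun h => ?_, fun hj => ?_⟩
  · by_contra! hj
    have hnode : (q ++ (1, 0) :: r).take (q.length + 1) = q ++ [(1, 0)] := by
      rw [List.take_append, List.take_of_length_le (by omega), Nat.add_sub_cancel_left]
      rfl
    have := isCatalan_take_iff.1 h (q.length + 1) hj
    simp only [hnode, List.sum_append, List.sum_singleton, Prod.fst_add, Prod.snd_add] at this
    omega
  · rw [List.take_append_of_le_length hj]
    exact hq.take j

theorem not_isCatalan_append_horizontal {q : List (ℕ × ℕ)} (hq : IsCatalan q)
    (hdiag : q.sum.1 = q.sum.2) (r : List (ℕ × ℕ)) : ¬IsCatalan (q ++ (1, 0) :: r) := by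
  have := isCatalan_take_append_horizontal_iff hq hdiag r (q ++ (1, 0) :: r).length
  rw [List.take_length] at this
  simp [this]

theorem append_horizontal_inj {q q' r r' : List (ℕ × ℕ)} (hq : IsCatalan q)
    (hdiag : q.sum.1 = q.sum.2) (hq' : IsCatalan q') (hdiag' : q'.sum.1 = q'.sum.2)
    (h : q ++ (1, 0) :: r = q' ++ (1, 0) :: r') : q = q' ∧ r = r' := by
  have key j : j ≤ q.length ↔ j ≤ q'.length := by
    rw [← isCatalan_take_append_horizontal_iff hq hdiag r, h,
      isCatalan_take_append_horizontal_iff hq' hdiag']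
  obtain ⟨rfl, hr⟩ := List.append_inj h (le_antisymm ((key _).1 le_rfl) ((key _).2 le_rfl))
  exact ⟨rfl, (List.cons.inj hr).2⟩

theorem exists_crossing_of_not_isCatalan (h : ¬IsCatalan p) :
    ∃ t < p.length, IsCatalan (p.take t) ∧ (p.take (t + 1)).sum.2 < (p.take (t + 1)).sum.1 := by
  classical
  have hex : ∃ j, (p.take j).sum.2 < (p.take j).sum.1 := by simpa [isCatalan_iff] using h
  obtain ⟨t, ht⟩ : ∃ t, Nat.find hex = t + 1 :=
    Nat.exists_eq_succ_of_ne_zero fun h0 => by simpa [h0] using Nat.find_spec hex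
  have hcat : IsCatalan (p.take t) :=
    isCatalan_take_iff.2 fun j hj => not_lt.1 (Nat.find_min hex (by omega))
  have hcross := ht ▸ Nat.find_spec hex
  refine ⟨t, ?_, hcat, hcross⟩
  by_contra! hlen
  exact (isCatalan_iff.1 (List.take_of_length_le hlen ▸ hcat) (t + 1)).not_gt hcross

theorem eq_horizontal_of_crossing (hhoriz : ∀ a : ℕ, (a, 0) ∈ S ↔ a = 1)
    (hslope : ∀ a b : ℕ, (a, b) ∈ S → 0 < b → a ≤ b) {v s : ℕ × ℕ} (hs : s ∈ S)
    (hv : v.1 ≤ v.2) (hcross : (v + s).2 < (v + s).1) : s = (1, 0) ∧ v.1 = v.2 := by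
  obtain ⟨a, b⟩ := s
  simp only [Prod.fst_add, Prod.snd_add] at hcross
  obtain rfl : b = 0 := by
    by_contra hb
    have := hslope a b hs (Nat.pos_of_ne_zero hb)
    omega
  obtain rfl : a = 1 := (hhoriz a).1 hs
  exact ⟨rfl, by omega⟩

theorem exists_append_horizontal_of_not_isCatalan (hhoriz : ∀ a : ℕ, (a, 0) ∈ S ↔ a = 1)
    (hslope : ∀ a b : ℕ, (a, b) ∈ S → 0 < b → a ≤ b) (hp : IsPath S (n + 1) (n + 1) p)
    (hc : ¬IsCatalan p) :
    ∃ x ∈ antidiagonal n, ∃ q r, (IsPath S x.1 x.1 q ∧ IsCatalan q) ∧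
      IsPath S x.2 (x.2 + 1) r ∧ q ++ (1, 0) :: r = p := by
  obtain ⟨hS, hsum⟩ := isPath_iff.1 hp
  obtain ⟨t, ht, hcat, hcross⟩ := exists_crossing_of_not_isCatalan hc
  rw [List.sum_take_succ _ _ ht] at hcross
  obtain ⟨hstep, hdiag⟩ := eq_horizontal_of_crossing hhoriz hslope (hS _ (List.getElem_mem ht))
    (by simpa using isCatalan_take_iff.1 hcat t le_rfl) hcross
  have hsplit : p.take t ++ (1, 0) :: p.drop (t + 1) = p := by
    rw [← hstep, ← List.drop_eq_getElem_cons ht, List.take_append_drop]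
  have htotal := hsplit ▸ hsum
  simp only [List.sum_append, List.sum_cons, Prod.ext_iff, Prod.fst_add, Prod.snd_add] at htotal
  set c := (p.take t).sum.1
  refine ⟨(c, n - c), mem_antidiagonal.2 (by dsimp; omega), p.take t, p.drop (t + 1),
    ⟨?_, hcat⟩, ?_, hsplit⟩
  · exact isPath_iff.2 ⟨fun s hs => hS s (List.mem_of_mem_take hs), Prod.ext rfl hdiag.symm⟩
  · exact isPath_iff.2 ⟨fun s hs => hS s (List.mem_of_mem_drop hs),
      Prod.ext (by dsimp; omega) (by dsimp; omega)⟩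

end Paths

section Finsets

variable {S : Set (ℕ × ℕ)} (h00 : (0, 0) ∉ S)

noncomputable def pathFinset (n m : ℕ) : Finset (List (ℕ × ℕ)) :=
  (setOf_isPath_finite h00 n m).toFinset

noncomputable def catalanFinset (n : ℕ) : Finset (List (ℕ × ℕ)) :=
  ((setOf_isPath_finite h00 n n).subset (t := {p | IsPath S n n p ∧ IsCatalan p})
    fun _ hp => hp.1).toFinset

variable {h00}

theorem mem_pathFinset {n m : ℕ} {p : List (ℕ × ℕ)} :
    p ∈ pathFinset h00 n m ↔ IsPath S n m p :=
  Set.Finite.mem_toFinset _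

theorem mem_catalanFinset {n : ℕ} {p : List (ℕ × ℕ)} :
    p ∈ catalanFinset h00 n ↔ IsPath S n n p ∧ IsCatalan p :=
  Set.Finite.mem_toFinset _

open Classical in
theorem filter_isCatalan_pathFinset (n : ℕ) :
    (pathFinset h00 n n).filter IsCatalan = catalanFinset h00 n := by
  ext p
  simp [mem_pathFinset, mem_catalanFinset]

variable (h00) in
noncomputable def crossingParts (n : ℕ) : Finset (Σ _ : ℕ × ℕ, List (ℕ × ℕ) × List (ℕ × ℕ)) :=
  (antidiagonal n).sigma fun x => catalanFinset h00 x.1 ×ˢ pathFinset h00 x.2 (x.2 + 1)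

def joinAtCrossing (y : Σ _ : ℕ × ℕ, List (ℕ × ℕ) × List (ℕ × ℕ)) : List (ℕ × ℕ) :=
  y.2.1 ++ (1, 0) :: y.2.2

theorem mem_crossingParts {n : ℕ} {y : Σ _ : ℕ × ℕ, List (ℕ × ℕ) × List (ℕ × ℕ)} :
    y ∈ crossingParts h00 n ↔ y.1.1 + y.1.2 = n ∧
      (IsPath S y.1.1 y.1.1 y.2.1 ∧ IsCatalan y.2.1) ∧ IsPath S y.1.2 (y.1.2 + 1) y.2.2 := by
  simp only [crossingParts, mem_sigma, mem_product, HasAntidiagonal.mem_antidiagonal,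
    mem_catalanFinset, mem_pathFinset]

theorem injOn_joinAtCrossing (n : ℕ) : Set.InjOn joinAtCrossing (crossingParts h00 n) := by
  rintro ⟨⟨i, k⟩, q, r⟩ hy ⟨⟨i', k'⟩, q', r'⟩ hy' h
  obtain ⟨hik, ⟨hq, hqc⟩, -⟩ := mem_crossingParts.1 hy
  obtain ⟨hik', ⟨hq', hqc'⟩, -⟩ := mem_crossingParts.1 hy'
  obtain ⟨rfl, rfl⟩ := append_horizontal_inj hqc hq.sum_fst_eq_snd hqc' hq'.sum_fst_eq_snd h
  obtain rfl : i = i' := by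
    simpa using (isPath_iff.1 hq).2.symm.trans (isPath_iff.1 hq').2
  obtain rfl : k = k' := by dsimp at hik hik'; omega
  rfl

open Classical in
theorem image_joinAtCrossing (hhoriz : ∀ a : ℕ, (a, 0) ∈ S ↔ a = 1)
    (hslope : ∀ a b : ℕ, (a, b) ∈ S → 0 < b → a ≤ b) (n : ℕ) :
    (crossingParts h00 n).image joinAtCrossing =
      (pathFinset h00 (n + 1) (n + 1)).filter (¬IsCatalan ·) := by
  ext p
  simp only [mem_image, mem_filter, mem_pathFinset, Sigma.exists, Prod.exists, mem_crossingParts]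
  constructor
  · rintro ⟨i, k, q, r, ⟨hik, ⟨hq, hqc⟩, hr⟩, rfl⟩
    exact ⟨hik ▸ isPath_append_horizontal ((hhoriz 1).2 rfl) hq hr,
      not_isCatalan_append_horizontal hqc hq.sum_fst_eq_snd r⟩
  · rintro ⟨hp, hc⟩
    obtain ⟨⟨i, k⟩, hik, q, r, hq, hr, rfl⟩ :=
      exists_append_horizontal_of_not_isCatalan hhoriz hslope hp hc
    exact ⟨i, k, q, r, ⟨HasAntidiagonal.mem_antidiagonal.1 hik, hq, hr⟩, rfl⟩

end Finsets

section Weights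

variable {S : Set (ℕ × ℕ)} {A : Type*} [CommSemiring A]

-- The step enumerators `a^w_{n,m}` and `p^w_n`.
variable (S) in
noncomputable def pathWeight (w : ℕ × ℕ → A) (n m : ℕ) : A :=
  ∑ᶠ p ∈ {p : List (ℕ × ℕ) | IsPath S n m p}, (p.map w).prod

variable (S) in
noncomputable def catalanWeight (w : ℕ × ℕ → A) (n : ℕ) : A :=
  ∑ᶠ p ∈ {p : List (ℕ × ℕ) | IsPath S n n p ∧ IsCatalan p}, (p.map w).prod

theorem pathWeight_eq_sum (h00 : (0, 0) ∉ S) (w : ℕ × ℕ → A) (n m : ℕ) :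
    pathWeight S w n m = ∑ p ∈ pathFinset h00 n m, (p.map w).prod := by
  rw [pathWeight, ← finsum_mem_coe_finset, pathFinset, Set.Finite.coe_toFinset]

theorem catalanWeight_eq_sum (h00 : (0, 0) ∉ S) (w : ℕ × ℕ → A) (n : ℕ) :
    catalanWeight S w n = ∑ p ∈ catalanFinset h00 n, (p.map w).prod := by
  rw [catalanWeight, ← finsum_mem_coe_finset, catalanFinset, Set.Finite.coe_toFinset]

theorem pathWeight_zero_zero (w : ℕ × ℕ → A) : pathWeight S w 0 0 = catalanWeight S w 0 := by
  simp only [pathWeight, catalanWeight]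
  congr! 3 with p
  exact ⟨fun hp => ⟨hp, isCatalan_of_isPath_zero hp⟩, And.left⟩

theorem pathWeight_succ_diag (h00 : (0, 0) ∉ S) (hhoriz : ∀ a : ℕ, (a, 0) ∈ S ↔ a = 1)
    (hslope : ∀ a b : ℕ, (a, b) ∈ S → 0 < b → a ≤ b) (w : ℕ × ℕ → A) (n : ℕ) :
    pathWeight S w (n + 1) (n + 1) = catalanWeight S w (n + 1) +
      ∑ x ∈ antidiagonal n, catalanWeight S w x.1 * (w (1, 0) * pathWeight S w x.2 (x.2 + 1)) := by
  classical
  rw [pathWeight_eq_sum h00, ← sum_filter_add_sum_filter_not _ IsCatalan,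
    filter_isCatalan_pathFinset, ← catalanWeight_eq_sum, ← image_joinAtCrossing hhoriz hslope,
    sum_image (injOn_joinAtCrossing n), crossingParts, sum_sigma]
  congr 1
  refine sum_congr rfl fun x _ => ?_
  rw [catalanWeight_eq_sum h00, pathWeight_eq_sum h00, mul_sum, sum_mul_sum, sum_product]
  simp [joinAtCrossing, List.prod_append]

end Weights

theorem stmt15 (A : Type*) [CommRing A]
    (S : Set (ℕ × ℕ)) (hhoriz : ∀ a : ℕ, (a, 0) ∈ S ↔ a = 1)
    (hslope : ∀ a b : ℕ, (a, b) ∈ S → 0 < b → a ≤ b)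
    (w : ℕ × ℕ → A) (ρ : A) (hw : w (1, 0) = ρ)
    (Pw D0w D1w : PowerSeries A)
    (hP : Pw = PowerSeries.mk fun n =>
      ∑ᶠ p ∈ {p : List (ℕ × ℕ) | IsPath S n n p ∧ IsCatalan p}, (p.map w).prod)
    (hD0 : D0w = PowerSeries.mk fun n =>
      ∑ᶠ p ∈ {p : List (ℕ × ℕ) | IsPath S n n p}, (p.map w).prod)
    (hD1 : D1w = PowerSeries.mk fun n => match n with
      | 0 => 0
      | k + 1 => ∑ᶠ p ∈ {p : List (ℕ × ℕ) | IsPath S k (k + 1) p}, (p.map w).prod) :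
    Pw * (1 + PowerSeries.C ρ * D1w) = D0w := by
  have h00 : (0, 0) ∉ S := fun h => zero_ne_one ((hhoriz 0).1 h)
  subst hP hD0 hD1 hw
  ext (_ | n)
  · simp only [coeff_zero_eq_constantCoeff, map_mul, map_add, constantCoeff_mk, constantCoeff_one,
      constantCoeff_C, mul_zero, add_zero, mul_one]
    exact (pathWeight_zero_zero w).symm
  · rw [mul_add, mul_one, map_add, coeff_mul, Finset.Nat.sum_antidiagonal_succ']
    simp only [coeff_mk, coeff_C_mul, mul_zero, zero_add]
    exact (pathWeight_succ_diag h00 hhoriz hslope w n).symm
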